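/- arXiv:1901.01566 — 6 statements merged into one kernel-verified Lean document; each statement's English description precedes it below -/
import Mathlib

section
/- Let K ⊗_C E be equipped with the derivations δ ⊗ 1 (i.e., δ(a ⊗ d) = δ(a) ⊗ d for each δ ∈ Δ). Then the map sending an ideal 𝔞 of E to its extension 𝔞^e = K ⊗_C 𝔞 in K ⊗_C E is a bijection between the set of all ideals of E and the set of differential ideals of K ⊗_C E (ideals stable under all the derivations δ ⊗ 1, δ ∈ Δ), with inverse given by contraction 𝔟 ↦ 𝔟^c = {d ∈ E : 1 ⊗ d ∈ 𝔟}. -/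
/-!
Extension of `𝔞` is the kernel of `K ⊗ E → K ⊗ (E ⧸ 𝔞)` (right exactness of `⊗`); this map commutes
with the derivations `δ ⊗ 1` and, `C` being a field, is injective on `1 ⊗ (E ⧸ 𝔞)`. For a
differential ideal `𝔟` with contraction `𝔞`, the image of `𝔟` in `K ⊗ (E ⧸ 𝔞)` is a `K`-subspace
stable under the `δ ⊗ 1` meeting `1 ⊗ (E ⧸ 𝔞)` only in `0`. Such a subspace is zero: in a nonzero
element with fewest nonzero coordinates in a `C`-basis, normalised to have a coordinate `1`, the
derivatives have fewer coordinates, hence vanish; so its coordinates are constants, i.e. lie in `C`,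
and the element lies in `1 ⊗ (E ⧸ 𝔞)`.
-/

open TensorProduct Finset

namespace Algebra.TensorProduct

section Basis

variable {C K V J : Type*} [CommRing C] [CommRing K] [Algebra C K] [AddCommGroup V] [Module C V]
  (b : Module.Basis J C V)

theorem basis_repr_rTensor (D : K →ₗ[C] K) (x : K ⊗[C] V) :
    (basis K b).repr (D.rTensor V x) = Finsupp.mapRange D D.map_zero ((basis K b).repr x) := by
  induction x using TensorProduct.induction_on with
  | zero => simp
  | tmul k v =>
    ext j
    simp [← Algebra.commutes, ← Algebra.smul_def]
  | add x y hx hy => simp [hx, hy, Finsupp.mapRange_add]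

theorem exists_one_tmul_eq_of_forall_repr_mem_range (x : K ⊗[C] V)
    (hx : ∀ j, ∃ c : C, algebraMap C K c = (basis K b).repr x j) :
    ∃ v : V, 1 ⊗ₜ v = x := by
  choose c hc using hx
  refine ⟨∑ j ∈ ((basis K b).repr x).support, c j • b j, ?_⟩
  conv_rhs => rw [← (basis K b).linearCombination_repr x, Finsupp.linearCombination_apply]
  rw [tmul_sum, Finsupp.sum]
  refine Finset.sum_congr rfl fun j _ => ?_
  rw [basis_repr_symm_apply', ← hc, Algebra.algebraMap_eq_smul_one, smul_tmul]

end Basis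

variable {C K V ι : Type*} [Field C] [Field K] [Algebra C K] [AddCommGroup V] [Module C V]

theorem eq_bot_of_rTensor_derivation_mem {δ : ι → Derivation C K K}
    (hconst : ∀ x : K, (∀ i, δ i x = 0) → ∃ c : C, algebraMap C K c = x)
    {M : Submodule K (K ⊗[C] V)} (hM : ∀ i, ∀ x ∈ M, (δ i).toLinearMap.rTensor V x ∈ M)
    (hM₁ : ∀ v : V, 1 ⊗ₜ v ∈ M → v = 0) : M = ⊥ := by
  classical
  set b := Module.Basis.ofVectorSpace C V
  set B := basis K b with hB
  suffices h : ∀ n, ∀ x ∈ M, #(B.repr x).support = n → x = 0 from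
    (Submodule.eq_bot_iff M).mpr fun x hx => h _ x hx rfl
  intro n
  induction n using Nat.strong_induction_on with
  | _ n ih =>
  intro x hx hn
  by_contra hx₀
  obtain ⟨j₀, hj₀⟩ : (B.repr x).support.Nonempty := by simpa using hx₀
  have hxj₀ : B.repr x j₀ ≠ 0 := Finsupp.mem_support_iff.mp hj₀
  set y := (B.repr x j₀)⁻¹ • x
  have hy : y ∈ M := M.smul_mem _ hx
  have hyj₀ : B.repr y j₀ = 1 := by simp [y, hxj₀]
  have hy_supp : (B.repr y).support = (B.repr x).support := by
    simp [y, Finsupp.support_smul_eq (inv_ne_zero hxj₀)]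
  have hδy : ∀ i, (δ i).toLinearMap.rTensor V y = 0 := fun i => by
    refine ih _ ?_ _ (hM i y hy) rfl
    calc #(B.repr _).support ≤ #((B.repr x).support.erase j₀) := by
          refine Finset.card_le_card fun j hj => ?_
          rw [basis_repr_rTensor, ← hB, Finsupp.mem_support_iff, Finsupp.mapRange_apply] at hj
          rw [Finset.mem_erase, ← hy_supp, Finsupp.mem_support_iff]
          exact ⟨by rintro rfl; simp [hyj₀] at hj, fun h => hj (by simp [h])⟩
      _ < n := hn ▸ Finset.card_erase_lt_of_mem hj₀
  obtain ⟨v, hv⟩ := exists_one_tmul_eq_of_forall_repr_mem_range b y fun j => hconst _ fun i => by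
    simpa [basis_repr_rTensor] using congr((basis K b).repr $(hδy i) j)
  have hv₀ := hM₁ v (hv ▸ hy)
  simp [hv₀, ← hv] at hyj₀

section Extension

variable {E : Type*} [CommRing E] [Algebra C E]

theorem map_id_rTensor_comm {F : Type*} [CommRing F] [Algebra C F] (g : E →ₐ[C] F)
    (D : K →ₗ[C] K) (x : K ⊗[C] E) :
    map (AlgHom.id C K) g (D.rTensor E x) = D.rTensor F (map (AlgHom.id C K) g x) := by
  induction x using TensorProduct.induction_on with
  | zero => simp
  | tmul k e => simp
  | add x y hx hy => simp [hx, hy]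

theorem ker_map_id_mkₐ (𝔞 : Ideal E) :
    RingHom.ker (map (AlgHom.id C K) (Ideal.Quotient.mkₐ C 𝔞)) = 𝔞.map includeRight := by
  rw [lTensor_ker _ (Ideal.Quotient.mkₐ_surjective C 𝔞)]
  exact congrArg _ (Ideal.Quotient.mkₐ_ker C 𝔞)

theorem rTensor_mem_map_includeRight (D : K →ₗ[C] K) {𝔞 : Ideal E} {x : K ⊗[C] E}
    (hx : x ∈ 𝔞.map includeRight) : D.rTensor E x ∈ 𝔞.map includeRight := by
  rw [← ker_map_id_mkₐ, RingHom.mem_ker] at hx ⊢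
  rw [map_id_rTensor_comm, hx, map_zero]

theorem comap_includeRight_map_includeRight (𝔞 : Ideal E) :
    (𝔞.map (includeRight : E →ₐ[C] K ⊗[C] E)).comap includeRight = 𝔞 := by
  ext d
  rw [Ideal.mem_comap, ← ker_map_id_mkₐ, RingHom.mem_ker]
  simp only [includeRight_apply, map_tmul, AlgHom.id_apply, Ideal.Quotient.mkₐ_eq_mk]
  rw [← includeRight_apply (A := K) (R := C),
    map_eq_zero_iff _ (includeRight_injective (algebraMap C K).injective),
    Ideal.Quotient.eq_zero_iff_mem]

theorem map_includeRight_comap_includeRight_of_rTensor_derivation_mem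
    {δ : ι → Derivation C K K} (hconst : ∀ x : K, (∀ i, δ i x = 0) → ∃ c : C, algebraMap C K c = x)
    {𝔟 : Ideal (K ⊗[C] E)} (h𝔟 : ∀ i, ∀ x ∈ 𝔟, (δ i).toLinearMap.rTensor E x ∈ 𝔟) :
    (𝔟.comap (includeRight : E →ₐ[C] K ⊗[C] E)).map includeRight = 𝔟 := by
  set 𝔞 := 𝔟.comap (includeRight : E →ₐ[C] K ⊗[C] E)
  set π := map (AlgHom.id C K) (Ideal.Quotient.mkₐ C 𝔞)
  have hπ : Function.Surjective π :=
    LinearMap.lTensor_surjective K (Ideal.Quotient.mkₐ_surjective C 𝔞)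
  refine le_antisymm Ideal.map_comap_le fun x hx => ?_
  rw [← ker_map_id_mkₐ, RingHom.mem_ker]
  have hM : (𝔟.map π).restrictScalars K = ⊥ := by
    refine eq_bot_of_rTensor_derivation_mem hconst (fun i y hy => ?_) fun v hv => ?_
    · obtain ⟨x, hx, rfl⟩ := (Ideal.mem_map_iff_of_surjective π hπ).mp hy
      rw [← map_id_rTensor_comm]
      exact Ideal.mem_map_of_mem π (h𝔟 i x hx)
    · obtain ⟨d, rfl⟩ := Ideal.Quotient.mk_surjective v
      obtain ⟨x, hx, hπx⟩ := (Ideal.mem_map_iff_of_surjective π hπ).mp hv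
      have hdx : 1 ⊗ₜ d - x ∈ 𝔞.map includeRight := by
        rw [← ker_map_id_mkₐ, RingHom.mem_ker, map_sub, hπx]
        simp
      have hd : 1 ⊗ₜ d ∈ 𝔟 := by simpa using add_mem (Ideal.map_comap_le hdx) hx
      exact Ideal.Quotient.eq_zero_iff_mem.mpr hd
  exact (Submodule.eq_bot_iff _).mp hM _ (Ideal.mem_map_of_mem π hx)

end Extension

end Algebra.TensorProduct

theorem extension_contraction_bijection_general
    (C K E : Type) [Field C]
    [Field K] [Algebra C K] [CommRing E] [Algebra C E]
    (ι : Type) (δ : ι → Derivation C K K)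
    (hconst : ∀ x : K, (∀ i, δ i x = 0) → ∃ c : C, algebraMap C K c = x) :
    -- extensions of ideals of `E` are differential ideals of `K ⊗[C] E`
    (∀ 𝔞 : Ideal E, ∀ i : ι, ∀ x ∈ Ideal.map
        (Algebra.TensorProduct.includeRight : E →ₐ[C] K ⊗[C] E) 𝔞,
        LinearMap.rTensor E (δ i).toLinearMap x ∈
          Ideal.map (Algebra.TensorProduct.includeRight : E →ₐ[C] K ⊗[C] E) 𝔞)
    -- the contraction of the extension of an ideal of `E` is the ideal itself
    ∧ (∀ 𝔞 : Ideal E,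
        Ideal.comap (Algebra.TensorProduct.includeRight : E →ₐ[C] K ⊗[C] E)
          (Ideal.map (Algebra.TensorProduct.includeRight : E →ₐ[C] K ⊗[C] E) 𝔞) = 𝔞)
    -- every differential ideal of `K ⊗[C] E` is the extension of its contraction
    ∧ (∀ 𝔟 : Ideal (K ⊗[C] E),
        (∀ i : ι, ∀ x ∈ 𝔟, LinearMap.rTensor E (δ i).toLinearMap x ∈ 𝔟) →
        Ideal.map (Algebra.TensorProduct.includeRight : E →ₐ[C] K ⊗[C] E)
          (Ideal.comap (Algebra.TensorProduct.includeRight : E →ₐ[C] K ⊗[C] E) 𝔟) = 𝔟) :=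
  ⟨fun _ i _ hx => Algebra.TensorProduct.rTensor_mem_map_includeRight (δ i).toLinearMap hx,
    Algebra.TensorProduct.comap_includeRight_map_includeRight,
    fun _ => Algebra.TensorProduct.map_includeRight_comap_includeRight_of_rTensor_derivation_mem
      hconst⟩

/-- Let `C` be an algebraically closed field of characteristic zero, `K` a field
extension of `C` with a finite set of commuting derivations (trivial on `C`) whose field of
constants is exactly `C`, and `E` a commutative `C`-algebra (with all derivations acting as zero).
Equip `K ⊗[C] E` with the derivations `δ ⊗ 1`.  Then extension `𝔞 ↦ 𝔞^e = K ⊗_C 𝔞` is a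
bijection from the set of all ideals of `E` onto the set of differential ideals of `K ⊗[C] E`,
with inverse given by contraction `𝔟 ↦ 𝔟^c = {d ∈ E : 1 ⊗ d ∈ 𝔟}`. -/
theorem extension_contraction_bijection
    (C K E : Type) [Field C] [IsAlgClosed C] [CharZero C]
    [Field K] [Algebra C K] [CommRing E] [Algebra C E]
    (ι : Type) [Fintype ι] (δ : ι → Derivation C K K)
    (hcomm : ∀ i j : ι, ∀ x : K, δ i (δ j x) = δ j (δ i x))
    (hconst : ∀ x : K, (∀ i, δ i x = 0) → ∃ c : C, algebraMap C K c = x) :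
    -- extensions of ideals of `E` are differential ideals of `K ⊗[C] E`
    (∀ 𝔞 : Ideal E, ∀ i : ι, ∀ x ∈ Ideal.map
        (Algebra.TensorProduct.includeRight : E →ₐ[C] K ⊗[C] E) 𝔞,
        LinearMap.rTensor E (δ i).toLinearMap x ∈
          Ideal.map (Algebra.TensorProduct.includeRight : E →ₐ[C] K ⊗[C] E) 𝔞)
    -- the contraction of the extension of an ideal of `E` is the ideal itself
    ∧ (∀ 𝔞 : Ideal E,
        Ideal.comap (Algebra.TensorProduct.includeRight : E →ₐ[C] K ⊗[C] E)
          (Ideal.map (Algebra.TensorProduct.includeRight : E →ₐ[C] K ⊗[C] E) 𝔞) = 𝔞)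
    -- every differential ideal of `K ⊗[C] E` is the extension of its contraction
    ∧ (∀ 𝔟 : Ideal (K ⊗[C] E),
        (∀ i : ι, ∀ x ∈ 𝔟, LinearMap.rTensor E (δ i).toLinearMap x ∈ 𝔟) →
        Ideal.map (Algebra.TensorProduct.includeRight : E →ₐ[C] K ⊗[C] E)
          (Ideal.comap (Algebra.TensorProduct.includeRight : E →ₐ[C] K ⊗[C] E) 𝔟) = 𝔟) :=
  extension_contraction_bijection_general C K E ι δ hconst
end

section
/- Let K ⊗_C E be equipped with the derivations δ ⊗ 1 (i.e., δ(a ⊗ d) = δ(a) ⊗ d for each δ ∈ Δ). Then every differential ideal 𝔟 of K ⊗_C E (an ideal stable under all derivations δ ⊗ 1, δ ∈ Δ) is the extension of its contraction: 𝔟 = K ⊗_C 𝔟^c, where 𝔟^c = {d ∈ E : 1 ⊗ d ∈ 𝔟}. -/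
set_option synthInstance.maxHeartbeats 1000000
set_option maxHeartbeats 1000000

open TensorProduct

/-- Core lemma: if a differential ideal of `K ⊗[C] F` has zero contraction to `F`,
then it is the zero ideal. -/
lemma differential_ideal_bot_of_contraction_bot
    (C K : Type) [Field C] [Field K] [Algebra C K]
    (F : Type) [CommRing F] [Algebra C F]
    (ι : Type) (δ : ι → Derivation C K K)
    (hconst : ∀ x : K, (∀ i, δ i x = 0) → ∃ c : C, algebraMap C K c = x)
    (𝔠 : Ideal (K ⊗[C] F))
    (hd : ∀ i : ι, ∀ x ∈ 𝔠, LinearMap.rTensor F (δ i).toLinearMap x ∈ 𝔠)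
    (hcontr : ∀ f : F, (1 : K) ⊗ₜ[C] f ∈ 𝔠 → f = 0) :
    𝔠 = ⊥ := by
  classical
  let B := Module.Basis.ofVectorSpace C F
  let bK := Algebra.TensorProduct.basis K B
  -- the derivations act on the coordinates w.r.t. the basis `bK`
  have hrepr : ∀ (i : ι) (x : K ⊗[C] F) (j),
      bK.repr (LinearMap.rTensor F (δ i).toLinearMap x) j = δ i (bK.repr x j) := by
    intro i x
    induction x using TensorProduct.induction_on with
    | zero => intro j; simp
    | tmul k f =>
      intro j
      rw [LinearMap.rTensor_tmul]
      have h1 : ((δ i).toLinearMap k) = δ i k := rfl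
      rw [h1]
      show (bK.repr ((δ i k) ⊗ₜ[C] f)) j = δ i ((bK.repr (k ⊗ₜ[C] f)) j)
      rw [Algebra.TensorProduct.basis_repr_tmul, Algebra.TensorProduct.basis_repr_tmul]
      simp only [Finsupp.smul_apply, Finsupp.mapRange_apply, smul_eq_mul]
      rw [Derivation.leibniz, Derivation.map_algebraMap]
      simp [mul_comm]
    | add x y hx hy =>
      intro j
      simp [map_add, hx, hy]
  rw [eq_bot_iff]
  intro x hx
  rw [Ideal.mem_bot]
  suffices h : ∀ n : ℕ, ∀ x ∈ 𝔠, (bK.repr x).support.card ≤ n → x = 0 by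
    exact h _ x hx le_rfl
  clear hx x
  intro n
  induction n with
  | zero =>
    intro x hx hcard
    have h0 : (bK.repr x).support = ∅ := Finset.card_eq_zero.mp (Nat.le_zero.mp hcard)
    have h1 : bK.repr x = 0 := Finsupp.support_eq_empty.mp h0
    have := bK.repr.injective (a₁ := x) (a₂ := 0) (by simp [h1])
    simpa using this
  | succ n ih =>
    intro x hx hcard
    by_cases hs : (bK.repr x).support = ∅
    · have h1 : bK.repr x = 0 := Finsupp.support_eq_empty.mp hs
      have := bK.repr.injective (a₁ := x) (a₂ := 0) (by simp [h1])
      simpa using this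
    · obtain ⟨j₀, hj₀⟩ := Finset.nonempty_iff_ne_empty.mpr hs
      set k₁ := bK.repr x j₀ with hk₁
      have hk₁0 : k₁ ≠ 0 := Finsupp.mem_support_iff.mp hj₀
      set y := k₁⁻¹ • x with hy
      have hy𝔠 : y ∈ 𝔠 := by
        rw [hy, Algebra.smul_def]
        exact Ideal.mul_mem_left _ _ hx
      have hyrepr : ∀ j, bK.repr y j = k₁⁻¹ * bK.repr x j := by
        intro j; rw [hy, map_smul]; simp [smul_eq_mul]
      have hyj₀ : bK.repr y j₀ = 1 := by
        rw [hyrepr, ← hk₁, inv_mul_cancel₀ hk₁0]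
      -- all derivatives of y vanish
      have hder0 : ∀ i, LinearMap.rTensor F (δ i).toLinearMap y = 0 := by
        intro i
        apply ih _ (hd i y hy𝔠)
        have hsub : (bK.repr (LinearMap.rTensor F (δ i).toLinearMap y)).support
            ⊆ (bK.repr x).support.erase j₀ := by
          intro j hj
          rw [Finsupp.mem_support_iff, hrepr] at hj
          rw [Finset.mem_erase, Finsupp.mem_support_iff]
          constructor
          · rintro rfl
            exact hj (by rw [hyj₀, Derivation.map_one_eq_zero])
          · intro h0
            exact hj (by rw [hyrepr, h0, mul_zero, map_zero])
        calc (bK.repr (LinearMap.rTensor F (δ i).toLinearMap y)).support.card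
            ≤ ((bK.repr x).support.erase j₀).card := Finset.card_le_card hsub
          _ = (bK.repr x).support.card - 1 := Finset.card_erase_of_mem hj₀
          _ ≤ n := by omega
      have hders : ∀ j, ∃ c : C, algebraMap C K c = bK.repr y j := by
        intro j
        apply hconst
        intro i
        have h2 : bK.repr (LinearMap.rTensor F (δ i).toLinearMap y) j = 0 := by
          rw [hder0 i]; simp
        rwa [hrepr] at h2
      choose c hc' using hders
      have hy1 : y = (1 : K) ⊗ₜ[C] ((bK.repr y).support.sum fun j => c j • (B j : F)) := by
        conv_lhs => rw [← bK.linearCombination_repr y]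
        rw [Finsupp.linearCombination_apply, Finsupp.sum, TensorProduct.tmul_sum]
        apply Finset.sum_congr rfl
        intro j _
        rw [← hc' j, Algebra.TensorProduct.basis_apply, tmul_smul, algebraMap_smul]
      have hf0 : ((bK.repr y).support.sum fun j => c j • (B j : F)) = 0 :=
        hcontr _ (hy1 ▸ hy𝔠)
      have hy0 : y = 0 := by rw [hy1, hf0, tmul_zero]
      have hx' : x = k₁ • y := by
        rw [hy, smul_smul, mul_inv_cancel₀ hk₁0, one_smul]
      rw [hx', hy0, smul_zero]

/-- Let `C` be an algebraically closed field of characteristic zero, `K` a field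
extension of `C` with a finite set of commuting derivations (trivial on `C`) whose field of
constants is exactly `C`, and `E` a commutative `C`-algebra (with all derivations acting as zero).
Equip `K ⊗[C] E` with the derivations `δ ⊗ 1`.  Then every differential ideal `𝔟` of `K ⊗[C] E`
is the extension of its contraction: `𝔟 = K ⊗_C 𝔟^c` where `𝔟^c = {d ∈ E : 1 ⊗ d ∈ 𝔟}`. -/
theorem differential_ideal_eq_extension_of_contraction
    (C K E : Type) [Field C] [IsAlgClosed C] [CharZero C]
    [Field K] [Algebra C K] [CommRing E] [Algebra C E]
    (ι : Type) [Fintype ι] (δ : ι → Derivation C K K)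
    (hcomm : ∀ i j : ι, ∀ x : K, δ i (δ j x) = δ j (δ i x))
    (hconst : ∀ x : K, (∀ i, δ i x = 0) → ∃ c : C, algebraMap C K c = x)
    (𝔟 : Ideal (K ⊗[C] E))
    (hdiff : ∀ i : ι, ∀ x ∈ 𝔟, LinearMap.rTensor E (δ i).toLinearMap x ∈ 𝔟) :
    Ideal.map (Algebra.TensorProduct.includeRight : E →ₐ[C] K ⊗[C] E)
      (Ideal.comap (Algebra.TensorProduct.includeRight : E →ₐ[C] K ⊗[C] E) 𝔟) = 𝔟 := by
  classical
  set I := Ideal.comap (Algebra.TensorProduct.includeRight : E →ₐ[C] K ⊗[C] E) 𝔟 with hI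
  apply le_antisymm Ideal.map_comap_le
  -- the hard direction: 𝔟 ≤ extension of I
  set φ : K ⊗[C] E →ₐ[C] K ⊗[C] (E ⧸ I) :=
    Algebra.TensorProduct.map (AlgHom.id C K) (Ideal.Quotient.mkₐ C I) with hφ
  have hφsurj : Function.Surjective φ :=
    LinearMap.lTensor_surjective K (Ideal.Quotient.mkₐ_surjective C I)
  have hker : RingHom.ker φ =
      Ideal.map (Algebra.TensorProduct.includeRight : E →ₐ[C] K ⊗[C] E) I := by
    rw [hφ, Algebra.TensorProduct.lTensor_ker _ (Ideal.Quotient.mkₐ_surjective C I)]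
    congr 1
    exact Ideal.Quotient.mkₐ_ker C I
  -- φ commutes with the derivations
  have hcomm' : ∀ (i : ι) (x : K ⊗[C] E),
      φ (LinearMap.rTensor E (δ i).toLinearMap x)
        = LinearMap.rTensor (E ⧸ I) (δ i).toLinearMap (φ x) := by
    intro i x
    induction x using TensorProduct.induction_on with
    | zero => simp
    | tmul k e =>
      rw [LinearMap.rTensor_tmul, hφ, Algebra.TensorProduct.map_tmul,
        Algebra.TensorProduct.map_tmul, LinearMap.rTensor_tmul]
      rfl
    | add x y hx hy => simp [map_add, hx, hy]
  -- the image ideal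
  set 𝔠 : Ideal (K ⊗[C] (E ⧸ I)) := Ideal.map φ 𝔟 with h𝔠
  have hd : ∀ i : ι, ∀ z ∈ 𝔠, LinearMap.rTensor (E ⧸ I) (δ i).toLinearMap z ∈ 𝔠 := by
    intro i z hz
    rw [h𝔠, Ideal.mem_map_iff_of_surjective φ hφsurj] at hz
    obtain ⟨b, hb, rfl⟩ := hz
    rw [← hcomm']
    exact Ideal.mem_map_of_mem φ (hdiff i b hb)
  have hcontr : ∀ f : E ⧸ I, (1 : K) ⊗ₜ[C] f ∈ 𝔠 → f = 0 := by
    intro f hf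
    obtain ⟨e, rfl⟩ := Ideal.Quotient.mk_surjective f
    rw [h𝔠, Ideal.mem_map_iff_of_surjective φ hφsurj] at hf
    obtain ⟨b, hb, hbe⟩ := hf
    have heq : φ ((1 : K) ⊗ₜ[C] e) = φ b := by
      rw [hbe, hφ, Algebra.TensorProduct.map_tmul]
      rfl
    have hker' : (1 : K) ⊗ₜ[C] e - b ∈ RingHom.ker φ := by
      rw [RingHom.mem_ker, map_sub, heq, sub_self]
    rw [hker] at hker'
    have h1e : (1 : K) ⊗ₜ[C] e ∈ 𝔟 := by
      have := Ideal.add_mem 𝔟 (Ideal.map_comap_le hker') hb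
      simpa using this
    have heI : e ∈ I := by
      rw [hI, Ideal.mem_comap]
      exact h1e
    rwa [Ideal.Quotient.eq_zero_iff_mem]
  have h𝔠bot : 𝔠 = ⊥ :=
    differential_ideal_bot_of_contraction_bot C K (E ⧸ I) ι δ hconst 𝔠 hd hcontr
  intro x hx
  have hφx : φ x = 0 := by
    have : φ x ∈ 𝔠 := Ideal.mem_map_of_mem φ hx
    rwa [h𝔠bot, Ideal.mem_bot] at this
  have hxm : x ∈ Ideal.map (Algebra.TensorProduct.includeRight : E →ₐ[C] K ⊗[C] E) I := by
    rw [← hker, RingHom.mem_ker]; exact hφx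
  exact hxm
end

section
/- The differential ring homomorphism φ : K ⊗_C E → K ⊗_C R defined by φ(a ⊗ d) = (a ⊗ 1)·d is injective. -/
set_option synthInstance.maxHeartbeats 1000000
set_option maxHeartbeats 1000000

open TensorProduct

section Preliminaries

variable (C K R : Type) [Field C] [Field K] [Algebra C K] [CommRing R] [Algebra C R]

/-- The map `δ(x ⊗ y) = δK x ⊗ y + x ⊗ δR y` on `K ⊗[C] R`, as a `C`-linear map. -/
noncomputable def tensorDerMap (dK : Derivation C K K) (dR : Derivation C R R) :
    K ⊗[C] R →ₗ[C] K ⊗[C] R :=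
  LinearMap.rTensor R dK.toLinearMap + LinearMap.lTensor K dR.toLinearMap

lemma tensorDerMap_tmul (dK : Derivation C K K) (dR : Derivation C R R) (a : K) (b : R) :
    tensorDerMap C K R dK dR (a ⊗ₜ b) = dK a ⊗ₜ b + a ⊗ₜ dR b := by
  simp [tensorDerMap]

lemma tensorDerMap_leibniz (dK : Derivation C K K) (dR : Derivation C R R) (x y : K ⊗[C] R) :
    tensorDerMap C K R dK dR (x * y)
      = x * tensorDerMap C K R dK dR y + y * tensorDerMap C K R dK dR x := by
  induction x using TensorProduct.induction_on with
  | zero => simp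
  | tmul a b =>
    induction y using TensorProduct.induction_on with
    | zero => simp
    | tmul c d =>
      simp only [Algebra.TensorProduct.tmul_mul_tmul, tensorDerMap_tmul, Derivation.leibniz,
        smul_eq_mul, TensorProduct.add_tmul, TensorProduct.tmul_add, mul_add]
      rw [mul_comm d b, mul_comm c a]
      ring_nf
    | add y1 y2 h1 h2 =>
      simp only [mul_add, map_add, h1, h2]
      ring_nf
  | add x1 x2 h1 h2 =>
    simp only [add_mul, map_add, h1, h2]
    ring_nf

/-- The extension of the derivations `dK` and `dR` to `K ⊗[C] R`,
`δ(x ⊗ y) = δ(x) ⊗ y + x ⊗ δ(y)`, as a bona fide derivation. -/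
noncomputable def tensorDer (dK : Derivation C K K) (dR : Derivation C R R) :
    Derivation C (K ⊗[C] R) (K ⊗[C] R) :=
  Derivation.mk' (tensorDerMap C K R dK dR) (by
    intro a b
    simpa [smul_eq_mul] using tensorDerMap_leibniz C K R dK dR a b)

end Preliminaries

section Constants

variable (C : Type) [Field C] (A : Type) [CommRing A] [Algebra C A]

/-- The subring (subalgebra) of constants of a differential ring. -/
def constantsSubalgebra (ι : Type) (D : ι → Derivation C A A) : Subalgebra C A where
  carrier := {x | ∀ i, D i x = 0}
  mul_mem' := by intro a b ha hb i; simp [Derivation.leibniz, ha i, hb i]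
  add_mem' := by intro a b ha hb i; simp [ha i, hb i]
  algebraMap_mem' := by intro c i; simp

end Constants

section LeveltMap

variable (C K R : Type) [Field C] [Field K] [Algebra C K] [CommRing R] [Algebra C R]
variable (ι : Type) (dK : ι → Derivation C K K) (dR : ι → Derivation C R R)

/-- `E`, the differential subring of constants of `K ⊗[C] R`. -/
noncomputable def constantsE : Subalgebra C (K ⊗[C] R) :=
  constantsSubalgebra C (K ⊗[C] R) ι (fun i => tensorDer C K R (dK i) (dR i))

/-- Levelt's differential ring homomorphism `φ : K ⊗[C] E → K ⊗[C] R`,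
`φ(a ⊗ d) = (a ⊗ 1)·d`. -/
noncomputable def leveltMap :
    (K ⊗[C] (constantsE C K R ι dK dR)) →ₐ[C] K ⊗[C] R :=
  Algebra.TensorProduct.productMap
    (Algebra.TensorProduct.includeLeft : K →ₐ[C] K ⊗[C] R)
    (constantsE C K R ι dK dR).val

end LeveltMap

/-!
`φ` is the `K`-linear extension of the inclusion `E → K ⊗[C] R`, so it is injective as soon as a
`C`-basis of `E` stays `K`-linearly independent in `K ⊗[C] R`. This holds for any family of
constants: in a shortest nontrivial `K`-linear relation, normalised to have a coefficient `1`,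
applying the derivations gives a shorter relation, so every coefficient is a constant of `K`, hence
lies in `C`, contradicting `C`-linear independence.
-/

open Function

section LiftBaseChange

variable {R A V W ι : Type*} [CommRing R] [CommRing A] [Algebra R A] [AddCommGroup V] [Module R V]
  [AddCommGroup W] [Module A W] [Module R W] [IsScalarTower R A W]

theorem LinearMap.liftBaseChange_injective_of_linearIndependent (b : Module.Basis ι R V)
    (f : V →ₗ[R] W) (h : LinearIndependent A (f ∘ b)) : Injective (f.liftBaseChange A) := by
  have : f.liftBaseChange A = Finsupp.linearCombination A (f ∘ b) ∘ₗ (b.baseChange A).repr := by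
    refine (b.baseChange A).ext fun i => ?_
    rw [LinearMap.comp_apply, LinearEquiv.coe_coe, Module.Basis.repr_self,
      Finsupp.linearCombination_single, one_smul, Module.Basis.baseChange_apply,
      LinearMap.liftBaseChange_tmul, one_smul]
    rfl
  rw [this, LinearMap.coe_comp]
  exact Injective.comp h (b.baseChange A).repr.injective

end LiftBaseChange

section LinearIndependentConstants

variable {C K M ι η : Type*} [CommRing C] [Field K] [Algebra C K] [AddCommGroup M] [Module K M]
  [Module C M] [IsScalarTower C K M]

theorem linearIndependent_of_linearIndependent_constants (dK : ι → Derivation C K K)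
    (D : ι → M →+ M) (hD : ∀ j (k : K) (x : M), D j (k • x) = dK j k • x + k • D j x)
    (hconst : ∀ x : K, (∀ j, dK j x = 0) → ∃ c : C, algebraMap C K c = x)
    {v : η → M} (hv : ∀ m j, D j (v m) = 0) (hind : LinearIndependent C v) :
    LinearIndependent K v := by
  classical
  rw [linearIndependent_iff']
  intro s
  induction s using Finset.strongInduction with
  | _ s IH =>
  intro g hg i hi
  by_contra hgi
  -- With `h i = 1`, differentiating drops the `i`-th term, so minimality of `s` applies.
  set h : η → K := fun m => (g i)⁻¹ * g m
  have hhi : h i = 1 := inv_mul_cancel₀ hgi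
  have hrel : ∑ m ∈ s, h m • v m = 0 := by
    simp only [h, mul_smul, ← Finset.smul_sum, hg, smul_zero]
  have hder : ∀ j, ∀ m ∈ s, dK j (h m) = 0 := by
    intro j
    have hsum : ∑ m ∈ s.erase i, dK j (h m) • v m = 0 := by
      rw [Finset.sum_erase s (by simp [hhi])]
      calc ∑ m ∈ s, dK j (h m) • v m = D j (∑ m ∈ s, h m • v m) := by simp [map_sum, hD, hv]
        _ = 0 := by rw [hrel, map_zero]
    intro m hm
    rcases eq_or_ne m i with rfl | hne
    · simp [hhi]
    · exact IH _ (Finset.erase_ssubset hi) _ hsum m (Finset.mem_erase.mpr ⟨hne, hm⟩)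
  have : ∀ m ∈ s, ∃ c, algebraMap C K c = h m := fun m hm => hconst _ (hder · m hm)
  choose! c hc using this
  have hcrel : ∑ m ∈ s, c m • v m = 0 := by
    rw [← hrel]
    refine Finset.sum_congr rfl fun m hm => ?_
    rw [← hc m hm, algebraMap_smul]
  have hci := linearIndependent_iff'.mp hind s c hcrel i hi
  simpa [hci, hhi] using hc i hi

end LinearIndependentConstants

section Levelt

variable {C K R : Type} [Field C] [Field K] [Algebra C K] [CommRing R] [Algebra C R]

theorem tensorDer_smul (dK : Derivation C K K) (dR : Derivation C R R) (k : K) (x : K ⊗[C] R) :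
    tensorDer C K R dK dR (k • x) = dK k • x + k • tensorDer C K R dK dR x := by
  have hk : tensorDer C K R dK dR (algebraMap K _ k) = algebraMap K _ (dK k) := by
    simp [tensorDer, tensorDerMap_tmul, Algebra.TensorProduct.algebraMap_apply]
  rw [Algebra.smul_def, Derivation.leibniz, hk, smul_eq_mul, smul_eq_mul, Algebra.smul_def,
    Algebra.smul_def, mul_comm x, add_comm]

theorem leveltMap_eq_liftBaseChange {ι : Type} (dK : ι → Derivation C K K)
    (dR : ι → Derivation C R R) :
    ⇑(leveltMap C K R ι dK dR) = (constantsE C K R ι dK dR).val.toLinearMap.liftBaseChange K := by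
  ext x
  induction x using TensorProduct.induction_on with
  | zero => simp
  | tmul a e => simp [leveltMap, Algebra.smul_def]
  | add x y hx hy => simp [hx, hy]

end Levelt

theorem leveltMap_injective_general
    (C R K : Type) [Field C]
    [CommRing R] [Algebra C R]
    [Field K] [Algebra C K]
    (ι : Type)
    (δR : ι → Derivation C R R) (δK : ι → Derivation C K K)
    (hconst : ∀ x : K, (∀ i, δK i x = 0) → ∃ c : C, algebraMap C K c = x) :
    Function.Injective (leveltMap C K R ι δK δR) := by
  let b := Module.Basis.ofVectorSpace C (constantsE C K R ι δK δR)
  rw [leveltMap_eq_liftBaseChange]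
  refine LinearMap.liftBaseChange_injective_of_linearIndependent b _ ?_
  refine linearIndependent_of_linearIndependent_constants δK
    (fun j => (tensorDer C K R (δK j) (δR j)).toAddMonoidHom) (fun j => tensorDer_smul _ _) hconst
    (fun m j => (b m).2 j) ?_
  exact b.linearIndependent.map' _ (LinearMap.ker_eq_bot.mpr Subtype.val_injective)

/-- `C` algebraically closed of characteristic zero, `R` an integral domain
containing `C` with a finite set of commuting derivations vanishing on `C`, `K` its field of
fractions with the derivations extended in the standard way, with field of constants exactly `C`.
The derivations are extended to `K ⊗[C] R` by `δ(x ⊗ y) = δ(x) ⊗ y + x ⊗ δ(y)` and `E` is the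
differential subring of constants of `K ⊗[C] R`.  Then the differential ring homomorphism
`φ : K ⊗[C] E → K ⊗[C] R`, `φ(a ⊗ d) = (a ⊗ 1)·d`, is injective. -/
theorem leveltMap_injective
    (C R K : Type) [Field C] [IsAlgClosed C] [CharZero C]
    [CommRing R] [IsDomain R] [Algebra C R]
    [Field K] [Algebra C K] [Algebra R K] [IsScalarTower C R K] [IsFractionRing R K]
    (ι : Type) [Fintype ι]
    (δR : ι → Derivation C R R) (δK : ι → Derivation C K K)
    (hcomm : ∀ i j : ι, ∀ x : K, δK i (δK j x) = δK j (δK i x))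
    (hext : ∀ i : ι, ∀ r : R, δK i (algebraMap R K r) = algebraMap R K (δR i r))
    (hconst : ∀ x : K, (∀ i, δK i x = 0) → ∃ c : C, algebraMap C K c = x) :
    Function.Injective (leveltMap C K R ι δK δR) :=
  leveltMap_injective_general C R K ι δR δK hconst
end

section
/- If the differential ring homomorphism φ : K ⊗_C E → K ⊗_C R, φ(a ⊗ d) = (a ⊗ 1)·d, is an isomorphism, then the differential ring K ⊗_C R is almost constant; that is, the map sending a radical ideal 𝔞 of E to the radical differential ideal of K ⊗_C R it generates is a bijection between the set of radical ideals of E and the set of radical differential ideals of K ⊗_C R (radical ideals stable under all the extended derivations). -/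
set_option synthInstance.maxHeartbeats 1000000
set_option maxHeartbeats 1000000

open TensorProduct

/-!
Sending `𝔞 ↦ √(𝔞 · (K ⊗ R))` and `𝔟 ↦ 𝔟 ∩ E` are mutually inverse. Since `K` is faithfully flat
over `C`, an ideal of `E` is recovered from the ideal it generates in `K ⊗ E`, and `φ` transports
this to `K ⊗ R`. Conversely, the preimage under `φ` of a differential ideal `𝔟` is a
`K`-subspace of `K ⊗ E` stable under the derivations `δ ⊗ 1`; as the constants of `K` are `C`,
a minimal-support argument shows that such a subspace is spanned by elements `1 ⊗ e`, so `𝔟` is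
generated by `𝔟 ∩ E`. Finally, in characteristic zero the radical of a differential ideal is
differential, which makes the first map land in radical differential ideals.
-/

section RadicalDerivation

variable {A : Type*} [CommRing A]

theorem Ideal.mem_of_nsmul_mem (C : Type*) [Field C] [CharZero C] [Algebra C A] {I : Ideal A}
    {n : ℕ} (hn : n ≠ 0) {a : A} (h : n • a ∈ I) : a ∈ I := by
  have hunit : IsUnit (n : A) := by
    simpa using (IsUnit.mk0 (n : C) (Nat.cast_ne_zero.mpr hn)).map (algebraMap C A)
  rw [nsmul_eq_mul] at h
  simpa [← mul_assoc, hunit.unit_spec] using I.mul_mem_left (hunit.unit⁻¹ : Aˣ) h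

theorem Ideal.pow_mul_derivation_pow_mem {C : Type*} [Field C] [CharZero C] [Algebra C A]
    (D : Derivation C A A) {I : Ideal A} (hI : ∀ x ∈ I, D x ∈ I) {x : A} (k m : ℕ)
    (hx : x ^ (k + m + 1) ∈ I) :
    x ^ k * D x ^ (2 * m + 1) ∈ I := by
  induction m generalizing k with
  | zero =>
    have h := hI _ hx
    rw [Derivation.leibniz_pow, smul_eq_mul] at h
    simpa [mul_comm] using Ideal.mem_of_nsmul_mem C k.succ_ne_zero h
  | succ m ih =>
    have hy := ih (k + 1) (by rwa [show k + 1 + m + 1 = k + (m + 1) + 1 by ring])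
    have key : (k + 1) • (x ^ k * D x ^ (2 * (m + 1) + 1))
        = D x * D (x ^ (k + 1) * D x ^ (2 * m + 1))
          - (2 * m + 1) • (x ^ (k + 1) * D x ^ (2 * m + 1) * D (D x)) := by
      simp only [Derivation.leibniz, Derivation.leibniz_pow, smul_eq_mul, nsmul_eq_mul,
        Nat.add_sub_cancel]
      push_cast
      ring
    refine Ideal.mem_of_nsmul_mem C k.succ_ne_zero ?_
    rw [key]
    exact I.sub_mem (I.mul_mem_left _ (hI _ hy)) (nsmul_mem (I.mul_mem_right _ hy) _)

theorem Ideal.derivation_mem_radical {C : Type*} [Field C] [CharZero C] [Algebra C A]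
    (D : Derivation C A A) {I : Ideal A} (hI : ∀ x ∈ I, D x ∈ I) {x : A} (hx : x ∈ I.radical) :
    D x ∈ I.radical := by
  obtain ⟨n, hn⟩ := hx
  have hn' : x ^ (0 + n + 1) ∈ I := by
    rw [zero_add, pow_succ]
    exact I.mul_mem_right x hn
  exact ⟨2 * n + 1, by simpa using Ideal.pow_mul_derivation_pow_mem D hI 0 n hn'⟩

end RadicalDerivation

theorem Ideal.derivation_mem_span {R A : Type*} [CommSemiring R] [CommRing A] [Algebra R A]
    (D : Derivation R A A) {S : Set A} (hS : ∀ s ∈ S, D s ∈ Ideal.span S) {x : A}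
    (hx : x ∈ Ideal.span S) : D x ∈ Ideal.span S := by
  induction hx using Submodule.span_induction with
  | mem s hs => exact hS s hs
  | zero => simp
  | add a b _ _ ha hb => rw [map_add]; exact Ideal.add_mem _ ha hb
  | smul a b hb hDb =>
    rw [smul_eq_mul, Derivation.leibniz, smul_eq_mul, smul_eq_mul]
    exact Ideal.add_mem _ (Ideal.mul_mem_left _ _ hDb) (Ideal.mul_mem_right _ _ hb)

theorem Algebra.TensorProduct.comap_includeRight_map_includeRight_s3 {C K A : Type*} [CommRing C]
    [Ring K] [Algebra C K] [Module.FaithfullyFlat C K] [CommRing A] [Algebra C A]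
    (𝔞 : Ideal A) :
    (𝔞.map (includeRight : A →ₐ[C] K ⊗[C] A)).comap includeRight = 𝔞 := by
  refine le_antisymm (fun e he => ?_) Ideal.le_comap_map
  have hker : RingHom.ker (map (AlgHom.id C K) (Ideal.Quotient.mkₐ C 𝔞)) = 𝔞.map includeRight :=
    (lTensor_ker _ (Ideal.Quotient.mkₐ_surjective C 𝔞)).trans
      (congrArg _ (Ideal.Quotient.mkₐ_ker C 𝔞))
  rw [Ideal.mem_comap, ← hker, RingHom.mem_ker] at he
  rw [← Ideal.Quotient.eq_zero_iff_mem]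
  simpa using he

section Descent

variable {C K : Type*} [Field C] [Field K] [Algebra C K] {V : Type*} [AddCommGroup V] [Module C V]

theorem Algebra.TensorProduct.basis_repr_rTensor_derivation {β : Type*}
    (b : Module.Basis β C V) (D : Derivation C K K) (x : K ⊗[C] V) (j : β) :
    (basis K b).repr (LinearMap.rTensor V D.toLinearMap x) j = D ((basis K b).repr x j) := by
  induction x using TensorProduct.induction_on with
  | zero => simp
  | tmul a v => simp [Derivation.leibniz, mul_comm]
  | add x y hx hy => simp [hx, hy]

variable {ι : Type*} (δ : ι → Derivation C K K)
  (hconst : ∀ x : K, (∀ i, δ i x = 0) → ∃ c : C, algebraMap C K c = x)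
include hconst

theorem TensorProduct.exists_eq_one_tmul_of_forall_rTensor_eq_zero {y : K ⊗[C] V}
    (hy : ∀ i, LinearMap.rTensor V (δ i).toLinearMap y = 0) : ∃ v : V, y = (1 : K) ⊗ₜ v := by
  classical
  let b := Module.Basis.ofVectorSpace C V
  let bK := Algebra.TensorProduct.basis K b
  have hcoeff (j) : ∃ c : C, algebraMap C K c = bK.repr y j := hconst _ fun i => by
    rw [← Algebra.TensorProduct.basis_repr_rTensor_derivation, hy i, map_zero,
      Finsupp.zero_apply]
  choose c hc using hcoeff
  refine ⟨∑ j ∈ (bK.repr y).support, c j • b j, ?_⟩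
  conv_lhs => rw [← bK.linearCombination_repr y]
  rw [Finsupp.linearCombination_apply, Finsupp.sum, TensorProduct.tmul_sum]
  refine Finset.sum_congr rfl fun j _ => ?_
  rw [← hc j, Algebra.TensorProduct.basis_apply, TensorProduct.tmul_smul, algebraMap_smul]

theorem Submodule.exists_one_tmul_mem_of_ne_bot {M : Submodule K (K ⊗[C] V)}
    (hM : ∀ i, ∀ x ∈ M, LinearMap.rTensor V (δ i).toLinearMap x ∈ M) (hne : M ≠ ⊥) :
    ∃ v ≠ 0, (1 : K) ⊗ₜ[C] v ∈ M := by
  classical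
  let bK := Algebra.TensorProduct.basis K (Module.Basis.ofVectorSpace C V)
  have hex : ∃ n, ∃ y ∈ M, y ≠ 0 ∧ (bK.repr y).support.card = n := by
    obtain ⟨y, hy, hy0⟩ := Submodule.exists_mem_ne_zero_of_ne_bot hne
    exact ⟨_, y, hy, hy0, rfl⟩
  obtain ⟨y, hyM, hy0, hcard⟩ := Nat.find_spec hex
  obtain ⟨j₀, hj₀⟩ := Finsupp.support_nonempty_iff.mpr (bK.repr.map_ne_zero_iff.mpr hy0)
  have hj₀' : bK.repr y j₀ ≠ 0 := Finsupp.mem_support_iff.mp hj₀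
  -- normalize one coefficient to `1`, so that every derivative has strictly smaller support
  set y' := (bK.repr y j₀)⁻¹ • y
  have hy'M : y' ∈ M := M.smul_mem _ hyM
  have hy'supp : (bK.repr y').support = (bK.repr y).support := by
    rw [map_smul]; exact Finsupp.support_smul_eq (inv_ne_zero hj₀')
  have hy'j₀ : bK.repr y' j₀ = 1 := by
    rw [map_smul, Finsupp.smul_apply, smul_eq_mul, inv_mul_cancel₀ hj₀']
  have hy'const (i) : LinearMap.rTensor _ (δ i).toLinearMap y' = 0 := by
    by_contra hz
    have hrepr := Algebra.TensorProduct.basis_repr_rTensor_derivation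
      (Module.Basis.ofVectorSpace C V) (δ i) y'
    have hsub : (bK.repr (LinearMap.rTensor _ (δ i).toLinearMap y')).support ⊂
        (bK.repr y).support := by
      rw [← hy'supp, Finset.ssubset_iff_of_subset]
      · refine ⟨j₀, by simp [hy'j₀], ?_⟩
        simp [bK, hrepr, hy'j₀]
      · intro j hj
        simp only [Finsupp.mem_support_iff, bK, hrepr] at hj ⊢
        exact fun h => hj (by rw [h, map_zero])
    exact (Finset.card_lt_card hsub).not_ge
      (hcard ▸ Nat.find_min' hex ⟨_, hM i _ hy'M, hz, rfl⟩)
  obtain ⟨v, hv⟩ := TensorProduct.exists_eq_one_tmul_of_forall_rTensor_eq_zero δ hconst hy'const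
  refine ⟨v, ?_, hv ▸ hy'M⟩
  rintro rfl
  exact smul_ne_zero (inv_ne_zero hj₀') hy0 (hv.trans (TensorProduct.tmul_zero _ _))

theorem Submodule.eq_baseChange_comap_of_rTensor_mem (M : Submodule K (K ⊗[C] V))
    (hM : ∀ i, ∀ x ∈ M, LinearMap.rTensor V (δ i).toLinearMap x ∈ M) :
    M = ((M.restrictScalars C).comap (TensorProduct.mk C K V 1)).baseChange K := by
  set W := (M.restrictScalars C).comap (TensorProduct.mk C K V 1)
  have hWM : W.baseChange K ≤ M := by
    rw [Submodule.baseChange_eq_span, Submodule.span_le]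
    rintro _ ⟨v, hv, rfl⟩
    exact hv
  have hker : LinearMap.ker (W.mkQ.baseChange K) = W.baseChange K := by
    ext x
    exact SetLike.ext_iff.mp (lTensor_mkQ K W) x
  refine le_antisymm (fun x hx => ?_) hWM
  suffices M.map (W.mkQ.baseChange K) = ⊥ by
    rw [← hker, LinearMap.mem_ker, ← Submodule.mem_bot K, ← this]
    exact Submodule.mem_map_of_mem hx
  by_contra hne
  refine absurd (Submodule.exists_one_tmul_mem_of_ne_bot δ hconst ?_ hne) ?_
  · rintro i _ ⟨x, hx, rfl⟩
    refine ⟨_, hM i x hx, ?_⟩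
    simp only [LinearMap.baseChange_eq_ltensor, ← LinearMap.comp_apply,
      LinearMap.lTensor_comp_rTensor, LinearMap.rTensor_comp_lTensor]
  · rintro ⟨q, hq, x, hx, hxq⟩
    obtain ⟨v, rfl⟩ := W.mkQ_surjective q
    have hdiff : x - (1 : K) ⊗ₜ v ∈ M := hWM <| by
      rw [← hker, LinearMap.mem_ker, map_sub, hxq, LinearMap.baseChange_tmul, sub_self]
    have hv : (1 : K) ⊗ₜ v ∈ M := by simpa using M.sub_mem hx hdiff
    exact hq ((Submodule.Quotient.mk_eq_zero W).mpr hv)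

end Descent

section LeveltMap

variable {C K R : Type} [Field C] [Field K] [Algebra C K] [CommRing R] [Algebra C R]
  {ι : Type} {δK : ι → Derivation C K K} {δR : ι → Derivation C R R}

theorem tensorDer_tmul (dK : Derivation C K K) (dR : Derivation C R R) (a : K) (b : R) :
    tensorDer C K R dK dR (a ⊗ₜ b) = dK a ⊗ₜ b + a ⊗ₜ dR b :=
  tensorDerMap_tmul C K R dK dR a b

theorem leveltMap_tmul (a : K) (d : constantsE C K R ι δK δR) :
    leveltMap C K R ι δK δR (a ⊗ₜ d) = (a ⊗ₜ[C] (1 : R)) * (d : K ⊗[C] R) := by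
  simp [leveltMap]

theorem leveltMap_comp_includeRight :
    (leveltMap C K R ι δK δR).comp Algebra.TensorProduct.includeRight =
      (constantsE C K R ι δK δR).val := by
  ext d
  simp [leveltMap_tmul, ← Algebra.TensorProduct.one_def]

theorem tensorDer_leveltMap (i : ι) (x : K ⊗[C] constantsE C K R ι δK δR) :
    tensorDer C K R (δK i) (δR i) (leveltMap C K R ι δK δR x) =
      leveltMap C K R ι δK δR (LinearMap.rTensor _ (δK i).toLinearMap x) := by
  induction x using TensorProduct.induction_on with
  | zero => simp
  | tmul a d =>
    rw [leveltMap_tmul, Derivation.leibniz, d.2 i, smul_zero, zero_add, smul_eq_mul,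
      tensorDer_tmul, Derivation.map_one_eq_zero, TensorProduct.tmul_zero, add_zero,
      LinearMap.rTensor_tmul, leveltMap_tmul, mul_comm]
    rfl
  | add x y hx hy => simp only [map_add, hx, hy]

theorem map_constantsE_val_eq_map_leveltMap (𝔞 : Ideal (constantsE C K R ι δK δR)) :
    𝔞.map (constantsE C K R ι δK δR).val =
      (𝔞.map Algebra.TensorProduct.includeRight).map (leveltMap C K R ι δK δR) := by
  rw [Ideal.map_mapₐ, leveltMap_comp_includeRight]

theorem comap_map_constantsE_val (hφ : Function.Bijective (leveltMap C K R ι δK δR))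
    (𝔞 : Ideal (constantsE C K R ι δK δR)) :
    (𝔞.map (constantsE C K R ι δK δR).val).comap (constantsE C K R ι δK δR).val = 𝔞 := by
  rw [map_constantsE_val_eq_map_leveltMap, ← leveltMap_comp_includeRight, ← Ideal.comap_comapₐ,
    Ideal.comap_map_of_bijective _ hφ,
    Algebra.TensorProduct.comap_includeRight_map_includeRight_s3]

theorem map_comap_constantsE_val
    (hconst : ∀ x : K, (∀ i, δK i x = 0) → ∃ c : C, algebraMap C K c = x)
    (hφ : Function.Bijective (leveltMap C K R ι δK δR)) (𝔟 : Ideal (K ⊗[C] R))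
    (h𝔟 : ∀ i, ∀ x ∈ 𝔟, tensorDer C K R (δK i) (δR i) x ∈ 𝔟) :
    (𝔟.comap (constantsE C K R ι δK δR).val).map (constantsE C K R ι δK δR).val = 𝔟 := by
  set φ := leveltMap C K R ι δK δR
  refine le_antisymm Ideal.map_comap_le fun x hx => ?_
  obtain ⟨y, rfl⟩ := hφ.2 x
  set M := (𝔟.comap φ).restrictScalars K
  have hM : ∀ i, ∀ z ∈ M, LinearMap.rTensor _ (δK i).toLinearMap z ∈ M := fun i z hz => by
    show φ _ ∈ 𝔟
    rw [← tensorDer_leveltMap]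
    exact h𝔟 i _ hz
  have hyM : y ∈ M := hx
  rw [Submodule.eq_baseChange_comap_of_rTensor_mem δK hconst M hM] at hyM
  have hspan : ((M.restrictScalars C).comap (TensorProduct.mk C K _ 1)).baseChange K ≤
      ((𝔟.comap (constantsE C K R ι δK δR).val).map
        Algebra.TensorProduct.includeRight).restrictScalars K := by
    rw [Submodule.baseChange_eq_span, Submodule.span_le]
    rintro _ ⟨d, hd, rfl⟩
    refine Ideal.mem_map_of_mem Algebra.TensorProduct.includeRight ?_
    simpa [M, φ, ← leveltMap_comp_includeRight] using hd
  rw [map_constantsE_val_eq_map_leveltMap]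
  exact Ideal.mem_map_of_mem φ (hspan hyM)

end LeveltMap

theorem almostConstant_of_leveltMap_bijective_general
    (C R K : Type) [Field C] [CharZero C]
    [CommRing R] [Algebra C R]
    [Field K] [Algebra C K]
    (ι : Type)
    (δR : ι → Derivation C R R) (δK : ι → Derivation C K K)
    (hconst : ∀ x : K, (∀ i, δK i x = 0) → ∃ c : C, algebraMap C K c = x)
    (hφ : Function.Bijective (leveltMap C K R ι δK δR)) :
    Set.BijOn
      (fun 𝔞 : Ideal (constantsE C K R ι δK δR) =>
        (Ideal.map (constantsE C K R ι δK δR).val 𝔞).radical)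
      {𝔞 : Ideal (constantsE C K R ι δK δR) | 𝔞.IsRadical}
      {𝔟 : Ideal (K ⊗[C] R) | 𝔟.IsRadical ∧
        ∀ i : ι, ∀ x ∈ 𝔟, tensorDer C K R (δK i) (δR i) x ∈ 𝔟} := by
  refine Set.InvOn.bijOn (f' := fun 𝔟 => 𝔟.comap (constantsE C K R ι δK δR).val) ⟨?_, ?_⟩ ?_ ?_
  · intro 𝔞 h𝔞
    simp only [Ideal.comap_radical, comap_map_constantsE_val hφ, h𝔞.radical]
  · rintro 𝔟 ⟨h𝔟, hdiff⟩
    simp only [map_comap_constantsE_val hconst hφ 𝔟 hdiff, h𝔟.radical]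
  · refine fun 𝔞 _ => ⟨Ideal.radical_isRadical _, fun i x hx => ?_⟩
    refine Ideal.derivation_mem_radical _ (fun y hy => Ideal.derivation_mem_span _ ?_ hy) hx
    rintro _ ⟨e, -, rfl⟩
    exact (e.2 i).symm ▸ Ideal.zero_mem _
  · exact fun 𝔟 h𝔟 => h𝔟.1.comap _

/-- In the setting of Levelt's map (with `K` differentially finitely generated
over `C`): if `φ : K ⊗[C] E → K ⊗[C] R`, `φ(a ⊗ d) = (a ⊗ 1)·d`, is an isomorphism, then the
differential ring `K ⊗[C] R` is almost constant, i.e., sending a radical ideal `𝔞` of `E` to the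
radical differential ideal of `K ⊗[C] R` it generates is a bijection between the set of radical
ideals of `E` and the set of radical differential ideals of `K ⊗[C] R`. -/
theorem almostConstant_of_leveltMap_bijective
    (C R K : Type) [Field C] [IsAlgClosed C] [CharZero C]
    [CommRing R] [IsDomain R] [Algebra C R]
    [Field K] [Algebra C K] [Algebra R K] [IsScalarTower C R K] [IsFractionRing R K]
    (ι : Type) [Fintype ι]
    (δR : ι → Derivation C R R) (δK : ι → Derivation C K K)
    (hcomm : ∀ i j : ι, ∀ x : K, δK i (δK j x) = δK j (δK i x))
    (hext : ∀ i : ι, ∀ r : R, δK i (algebraMap R K r) = algebraMap R K (δR i r))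
    (hconst : ∀ x : K, (∀ i, δK i x = 0) → ∃ c : C, algebraMap C K c = x)
    (hfg : ∃ s : Finset K, ∀ L : Subfield K, (∀ c : C, algebraMap C K c ∈ L) →
      (↑s : Set K) ⊆ L → (∀ i : ι, ∀ x ∈ L, δK i x ∈ L) → L = ⊤)
    (hφ : Function.Bijective (leveltMap C K R ι δK δR)) :
    Set.BijOn
      (fun 𝔞 : Ideal (constantsE C K R ι δK δR) =>
        (Ideal.map (constantsE C K R ι δK δR).val 𝔞).radical)
      {𝔞 : Ideal (constantsE C K R ι δK δR) | 𝔞.IsRadical}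
      {𝔟 : Ideal (K ⊗[C] R) | 𝔟.IsRadical ∧
        ∀ i : ι, ∀ x ∈ 𝔟, tensorDer C K R (δK i) (δR i) x ∈ 𝔟} :=
  almostConstant_of_leveltMap_bijective_general C R K ι δR δK hconst hφ
end

section
/- Assume the differential ring homomorphism φ : K ⊗_C E → K ⊗_C R, φ(a ⊗ d) = (a ⊗ 1)·d, is an isomorphism. Let M be a differential field extension of K (a field containing K with derivations indexed by Δ extending those of K), let D_σ denote the field of constants of M, and let σ : K → M be a differential C-algebra homomorphism (a ring homomorphism fixing C and commuting with each derivation in Δ). Then σ(K) is contained in the compositum K·D_σ, the subfield of M generated by the image of K under its inclusion into M together with D_σ. -/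
set_option synthInstance.maxHeartbeats 1000000
set_option maxHeartbeats 1000000

open TensorProduct

/-- In the setting of Levelt's map (with `K` differentially finitely generated over
`C`): assume `φ : K ⊗[C] E → K ⊗[C] R`, `φ(a ⊗ d) = (a ⊗ 1)·d`, is an isomorphism.  Let `M` be a
differential field extension of `K`, `D_σ` the field of constants of `M`, and `σ : K → M` a
differential `C`-algebra homomorphism.  Then `σ(K)` is contained in the compositum `K·D_σ`, the
subfield of `M` generated by the image of `K` together with `D_σ`. -/
theorem image_le_compositum_of_leveltMap_bijective
    (C R K : Type) [Field C] [IsAlgClosed C] [CharZero C]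
    [CommRing R] [IsDomain R] [Algebra C R]
    [Field K] [Algebra C K] [Algebra R K] [IsScalarTower C R K] [IsFractionRing R K]
    (ι : Type) [Fintype ι]
    (δR : ι → Derivation C R R) (δK : ι → Derivation C K K)
    (hcomm : ∀ i j : ι, ∀ x : K, δK i (δK j x) = δK j (δK i x))
    (hext : ∀ i : ι, ∀ r : R, δK i (algebraMap R K r) = algebraMap R K (δR i r))
    (hconst : ∀ x : K, (∀ i, δK i x = 0) → ∃ c : C, algebraMap C K c = x)
    (hfg : ∃ s : Finset K, ∀ L : Subfield K, (∀ c : C, algebraMap C K c ∈ L) →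
      (↑s : Set K) ⊆ L → (∀ i : ι, ∀ x ∈ L, δK i x ∈ L) → L = ⊤)
    (hφ : Function.Bijective (leveltMap C K R ι δK δR))
    -- `M`, a differential field extension of `K`
    (M : Type) [Field M] [Algebra C M] [Algebra K M] [IsScalarTower C K M]
    (δM : ι → Derivation C M M)
    (hMext : ∀ i : ι, ∀ x : K, δM i (algebraMap K M x) = algebraMap K M (δK i x))
    -- `σ`, a differential `C`-algebra homomorphism `K → M`
    (σ : K →ₐ[C] M)
    (hσ : ∀ i : ι, ∀ x : K, δM i (σ x) = σ (δK i x)) :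
    ∀ x : K, σ x ∈ Subfield.closure
      (Set.range (algebraMap K M) ∪ {m : M | ∀ i : ι, δM i m = 0}) := by
  
  -- The evaluation map `μ : K ⊗[C] R → M`, `a ⊗ r ↦ a · σ(r)`.
  set μ : (K ⊗[C] R) →ₐ[C] M :=
    Algebra.TensorProduct.productMap (IsScalarTower.toAlgHom C K M)
      (σ.comp (IsScalarTower.toAlgHom C R K)) with hμdef
  have hμtmul : ∀ (a : K) (b : R),
      μ (a ⊗ₜ[C] b) = algebraMap K M a * σ (algebraMap R K b) := by
    intro a b
    simp [hμdef, Algebra.TensorProduct.productMap_apply_tmul]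
  -- μ is a differential homomorphism.
  have hμder : ∀ (i : ι) (x : K ⊗[C] R),
      δM i (μ x) = μ (tensorDer C K R (δK i) (δR i) x) := by
    intro i x
    have htd : ∀ (a : K) (b : R),
        tensorDer C K R (δK i) (δR i) (a ⊗ₜ[C] b) = δK i a ⊗ₜ[C] b + a ⊗ₜ[C] δR i b := by
      intro a b
      have : (tensorDer C K R (δK i) (δR i)) (a ⊗ₜ[C] b)
          = tensorDerMap C K R (δK i) (δR i) (a ⊗ₜ[C] b) := rfl
      rw [this, tensorDerMap_tmul]
    induction x using TensorProduct.induction_on with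
    | zero => simp
    | tmul a b =>
      rw [htd, map_add, hμtmul, hμtmul, hμtmul, Derivation.leibniz]
      rw [hσ i, ← hext i, hMext i]
      simp [smul_eq_mul]
      ring
    | add x y hx hy => simp [map_add, hx, hy]
  -- Constants of `K ⊗ R` map to constants of `M`.
  have hEconst : ∀ e : (constantsE C K R ι δK δR), ∀ i : ι, δM i (μ e.val) = 0 := by
    intro e i
    rw [hμder i]
    have he : tensorDer C K R (δK i) (δR i) e.val = 0 := e.2 i
    rw [he, map_zero]
  -- Every element in the image of `μ ∘ φ` lies in the compositum.
  have key : ∀ t : K ⊗[C] (constantsE C K R ι δK δR),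
      μ (leveltMap C K R ι δK δR t) ∈ Subfield.closure
        (Set.range (algebraMap K M) ∪ {m : M | ∀ i : ι, δM i m = 0}) := by
    intro t
    induction t using TensorProduct.induction_on with
    | zero => simp only [map_zero]; exact zero_mem _
    | tmul a e =>
      have hlev : leveltMap C K R ι δK δR (a ⊗ₜ[C] e) = (a ⊗ₜ[C] (1 : R)) * e.val := by
        simp [leveltMap, Algebra.TensorProduct.productMap_apply_tmul,
          Algebra.TensorProduct.includeLeft_apply]
      rw [hlev, map_mul, hμtmul]
      have h1 : algebraMap K M a ∈ Subfield.closure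
          (Set.range (algebraMap K M) ∪ {m : M | ∀ i : ι, δM i m = 0}) :=
        Subfield.subset_closure (Or.inl ⟨a, rfl⟩)
      have h2 : μ e.val ∈ Subfield.closure
          (Set.range (algebraMap K M) ∪ {m : M | ∀ i : ι, δM i m = 0}) :=
        Subfield.subset_closure (Or.inr (hEconst e))
      simp only [map_one, mul_one]
      exact mul_mem h1 h2
    | add x y hx hy =>
      rw [map_add, map_add]
      exact add_mem hx hy
  -- Hence `σ(R)` lands in the compositum.
  have hR : ∀ r : R, σ (algebraMap R K r) ∈ Subfield.closure
      (Set.range (algebraMap K M) ∪ {m : M | ∀ i : ι, δM i m = 0}) := by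
    intro r
    obtain ⟨t, ht⟩ := hφ.2 ((1 : K) ⊗ₜ[C] r)
    have : μ ((1 : K) ⊗ₜ[C] r) = σ (algebraMap R K r) := by
      rw [hμtmul]; simp
    rw [← this, ← ht]
    exact key t
  -- Conclude for all of `K` by writing elements as fractions over `R`.
  intro x
  obtain ⟨a, b, hb, hx⟩ := IsFractionRing.div_surjective (A := R) x
  have : σ x = σ (algebraMap R K a) / σ (algebraMap R K b) := by
    rw [← hx, map_div₀]
  rw [this]
  exact div_mem (hR a) (hR b)
end

section
/- If det(J_F) is a nonzero element of C, then the field extension C(X_1, …, X_n)/C(F_1, …, F_n) is algebraic; that is, each X_i is algebraic over the subfield of C(X_1, …, X_n) generated over C by F_1, …, F_n. -/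
set_option synthInstance.maxHeartbeats 1000000
set_option maxHeartbeats 1000000

open MvPolynomial

lemma deriv_aeval_eq {C L K M : Type*} [CommSemiring C] [CommRing L] [CommRing K]
    [Algebra C K] [Algebra C L] [Algebra L K] [IsScalarTower C L K]
    [AddCommGroup M] [Module K M] [Module L M] [IsScalarTower L K M]
    {n : ℕ} (d : Derivation L K M) (x : Fin n → K) (p : MvPolynomial (Fin n) C) :
    d (aeval x p) = ∑ l, aeval x (pderiv l p) • d (x l) := by
  classical
  induction p using MvPolynomial.induction_on with
  | C a =>
      rw [aeval_C, IsScalarTower.algebraMap_apply C L K, Derivation.map_algebraMap]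
      simp
  | add p q hp hq => simp [map_add, hp, hq, add_smul, Finset.sum_add_distrib]
  | mul_X p i hp =>
      rw [map_mul, aeval_X, Derivation.leibniz, hp, Finset.smul_sum]
      have key : ∀ l : Fin n, aeval x (pderiv l (p * X i)) • d (x l)
          = x i • (aeval x (pderiv l p) • d (x l))
            + (if i = l then aeval x p • d (x l) else 0) := by
        intro l
        rw [pderiv_mul, pderiv_X, map_add, map_mul, map_mul, aeval_X, add_smul]
        congr 1
        · rw [mul_comm, mul_smul]
        · rcases eq_or_ne i l with rfl | h
          · rw [if_pos rfl, Pi.single_eq_same, map_one, mul_one]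
          · rw [if_neg h, Pi.single_eq_of_ne h, map_zero, mul_zero, zero_smul]
      rw [Finset.sum_congr rfl fun l _ => key l, Finset.sum_add_distrib,
        Finset.sum_ite_eq (Finset.univ : Finset (Fin n)) i
          (fun l => aeval x p • d (x l))]
      simp [add_comm]


/-- Let `C` be an algebraically closed field of characteristic zero, `n > 0`, and
`F = (F_1, …, F_n)` a polynomial map.  If `det J_F` is a nonzero element of `C`, then the field
extension `C(X_1, …, X_n)/C(F_1, …, F_n)` is algebraic: each `X_i` is algebraic over the subfield
of `C(X_1, …, X_n)` generated over `C` by `F_1, …, F_n`. -/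
theorem algebraic_over_adjoin_F (C : Type) [Field C] [IsAlgClosed C] [CharZero C]
    (n : ℕ) (hn : 0 < n)
    (F : Fin n → MvPolynomial (Fin n) C) (c : C) (hc : c ≠ 0)
    (hdet : (Matrix.of fun k l => pderiv l (F k)).det = MvPolynomial.C c) :
    ∀ i : Fin n, IsAlgebraic
      (IntermediateField.adjoin C
        (Set.range fun k => algebraMap (MvPolynomial (Fin n) C)
          (FractionRing (MvPolynomial (Fin n) C)) (F k)))
      (algebraMap (MvPolynomial (Fin n) C) (FractionRing (MvPolynomial (Fin n) C)) (X i)) := by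
  classical
  set φ := algebraMap (MvPolynomial (Fin n) C) (FractionRing (MvPolynomial (Fin n) C)) with hφ
  suffices h : Algebra.IsAlgebraic
      (IntermediateField.adjoin C (Set.range fun k => φ (F k)))
      (FractionRing (MvPolynomial (Fin n) C)) by
    intro i; exact h.isAlgebraic _
  set L := IntermediateField.adjoin C (Set.range fun k => φ (F k)) with hLdef
  -- essentially of finite type
  haveI : Algebra.EssFiniteType C (MvPolynomial (Fin n) C) :=
    Algebra.EssFiniteType.of_finiteType C (MvPolynomial (Fin n) C)
  haveI : Algebra.EssFiniteType (MvPolynomial (Fin n) C)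
      (FractionRing (MvPolynomial (Fin n) C)) :=
    Algebra.EssFiniteType.of_isLocalization (FractionRing (MvPolynomial (Fin n) C))
      (nonZeroDivisors (MvPolynomial (Fin n) C))
  haveI : Algebra.EssFiniteType C (FractionRing (MvPolynomial (Fin n) C)) :=
    Algebra.EssFiniteType.comp C (MvPolynomial (Fin n) C)
      (FractionRing (MvPolynomial (Fin n) C))
  haveI : Algebra.EssFiniteType L (FractionRing (MvPolynomial (Fin n) C)) :=
    Algebra.EssFiniteType.of_comp C L (FractionRing (MvPolynomial (Fin n) C))
  -- the universal derivation
  set d := KaehlerDifferential.D L (FractionRing (MvPolynomial (Fin n) C)) with hd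
  have hφa : ∀ p : MvPolynomial (Fin n) C, φ p = aeval (fun l => φ (X l)) p := by
    intro p
    have h1 := MvPolynomial.aeval_unique
      (IsScalarTower.toAlgHom C (MvPolynomial (Fin n) C)
        (FractionRing (MvPolynomial (Fin n) C)))
    calc φ p = (IsScalarTower.toAlgHom C (MvPolynomial (Fin n) C)
          (FractionRing (MvPolynomial (Fin n) C))) p := rfl
      _ = aeval ((IsScalarTower.toAlgHom C (MvPolynomial (Fin n) C)
          (FractionRing (MvPolynomial (Fin n) C))) ∘ X) p := by rw [← h1]
      _ = aeval (fun l => φ (X l)) p := rfl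
  have hchain : ∀ p : MvPolynomial (Fin n) C,
      d (φ p) = ∑ l, φ (pderiv l p) • d (φ (X l)) := by
    intro p
    rw [hφa p, deriv_aeval_eq]
    exact Finset.sum_congr rfl fun l _ => by rw [← hφa]
  have hF0 : ∀ j, d (φ (F j)) = 0 := by
    intro j
    have hmem : φ (F j) ∈ L := IntermediateField.subset_adjoin C _ ⟨j, rfl⟩
    have h2 : φ (F j) = algebraMap L (FractionRing (MvPolynomial (Fin n) C))
      ⟨φ (F j), hmem⟩ := rfl
    rw [h2, Derivation.map_algebraMap]
  -- matrix argument
  set Mm : Matrix (Fin n) (Fin n) (FractionRing (MvPolynomial (Fin n) C)) :=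
    Matrix.of fun j l => φ (pderiv l (F j)) with hMm
  have hdetK : Mm.det = algebraMap C (FractionRing (MvPolynomial (Fin n) C)) c := by
    have h3 : Mm = φ.mapMatrix (Matrix.of fun k l => pderiv l (F k)) := rfl
    rw [h3, ← RingHom.map_det, hdet, ← MvPolynomial.algebraMap_eq,
      ← IsScalarTower.algebraMap_apply C (MvPolynomial (Fin n) C)
        (FractionRing (MvPolynomial (Fin n) C))]
  have hunit : IsUnit Mm.det := by
    rw [hdetK]
    exact (isUnit_iff_ne_zero.2 hc).map
      (algebraMap C (FractionRing (MvPolynomial (Fin n) C)))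
  have hsys : ∀ j, ∑ l, Mm j l • d (φ (X l)) = 0 := by
    intro j
    have : ∀ l, Mm j l = φ (pderiv l (F j)) := fun l => rfl
    rw [Finset.sum_congr rfl fun l _ => by rw [this l], ← hchain, hF0]
  have hv0 : ∀ k, d (φ (X k)) = 0 := by
    intro k
    have h1 : d (φ (X k))
        = ∑ l, (1 : Matrix (Fin n) (Fin n) (FractionRing (MvPolynomial (Fin n) C))) k l
            • d (φ (X l)) := by
      rw [Finset.sum_congr rfl fun l (_ : l ∈ Finset.univ) => by rw [Matrix.one_apply]]
      simp
    rw [h1, ← Matrix.nonsing_inv_mul Mm hunit]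
    calc ∑ l, (Mm⁻¹ * Mm) k l • d (φ (X l))
        = ∑ l, ∑ j, (Mm⁻¹ k j * Mm j l) • d (φ (X l)) := by
          refine Finset.sum_congr rfl fun l _ => ?_
          rw [Matrix.mul_apply, Finset.sum_smul]
      _ = ∑ j, Mm⁻¹ k j • ∑ l, Mm j l • d (φ (X l)) := by
          rw [Finset.sum_comm]
          refine Finset.sum_congr rfl fun j _ => ?_
          rw [Finset.smul_sum]
          exact Finset.sum_congr rfl fun l _ => by rw [mul_smul]
      _ = 0 := by simp [hsys]
  have hD0 : ∀ a : FractionRing (MvPolynomial (Fin n) C), d a = 0 := by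
    intro a
    obtain ⟨p, q, hq, rfl⟩ :=
      IsFractionRing.div_surjective (A := MvPolynomial (Fin n) C) a
    have hp0 : d (φ p) = 0 := by rw [hchain]; simp [hv0]
    have hq0 : d (φ q) = 0 := by rw [hchain]; simp [hv0]
    have : d (φ p / φ q) = 0 := by
      rw [d.leibniz_div_const _ _ hq0, hp0, smul_zero]
    exact this
  have hsub : Subsingleton (Ω[(FractionRing (MvPolynomial (Fin n) C))⁄L]) := by
    refine (subsingleton_iff_forall_eq 0).mpr fun y => ?_
    have hle : (⊤ : Submodule (FractionRing (MvPolynomial (Fin n) C))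
        (Ω[(FractionRing (MvPolynomial (Fin n) C))⁄L])) ≤ ⊥ := by
      rw [← KaehlerDifferential.span_range_derivation, Submodule.span_le]
      rintro _ ⟨a, rfl⟩
      simpa using hD0 a
    exact (Submodule.mem_bot (FractionRing (MvPolynomial (Fin n) C))).1 (hle trivial)
  haveI : Algebra.FormallyUnramified L (FractionRing (MvPolynomial (Fin n) C)) := ⟨hsub⟩
  haveI : Algebra.IsSeparable L (FractionRing (MvPolynomial (Fin n) C)) :=
    Algebra.FormallyUnramified.isSeparable L (FractionRing (MvPolynomial (Fin n) C))
  exact Algebra.IsSeparable.isAlgebraic L (FractionRing (MvPolynomial (Fin n) C))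
end
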